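/- Let n ≥ 1, λ_1,…,λ_n pairwise distinct reals, α_1,…,α_n reals, and let y_1,…,y_n : ℝ × I → ℝ be smooth and nowhere vanishing (I an open interval, 0 ∉ I) satisfying (yxx), (yt) and the constraint (uy). Define f_j := (∂_x y_j + α_j)/(2 y_j). Then for each j: ∂_x y_j = 2 y_j f_j − α_j, ∂_x f_j = u − f_j² − λ_j, and ∂_t f_j = ∂_x(∂_x u − 2(u + 2λ_j) f_j) on ℝ × I. -/

import Mathlib

/-!
The first identity is the definition of `fⱼ` solved for `∂ₓyⱼ`. Differentiating
`fⱼ = (∂ₓyⱼ + αⱼ)/(2yⱼ)` in `x` by the quotient rule and inserting (yxx) gives the Riccati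
equation `∂ₓfⱼ = u − fⱼ² − λⱼ`. For the time equation, differentiate `fⱼ` in `t`, exchange
`∂ₜ∂ₓyⱼ = ∂ₓ∂ₜyⱼ` (symmetry of second derivatives on the open set `ℝ × I`) and differentiate
(yt) in `x`: both sides of `∂ₜfⱼ = ∂ₓ(∂ₓu − 2(u + 2λⱼ)fⱼ)` then become the same rational
expression in `yⱼ, ∂ₓyⱼ, ∂ₓ²yⱼ, u, ∂ₓu, ∂ₓ²u`.
-/

open Set Function

noncomputable section

/-- Partial derivative in the first (space) variable. -/
def pdx (u : ℝ → ℝ → ℝ) : ℝ → ℝ → ℝ := fun x t => deriv (fun x' => u x' t) x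

/-- Partial derivative in the second (time) variable. -/
def pdt (u : ℝ → ℝ → ℝ) : ℝ → ℝ → ℝ := fun x t => deriv (fun t' => u x t') t

/-- The constraint (uy): `u = x/(6t) + (y₁ + ⋯ + yₙ)/(3t)`. -/
def ucon (n : ℕ) (y : Fin n → ℝ → ℝ → ℝ) : ℝ → ℝ → ℝ :=
  fun x t => x / (6*t) + (∑ j, y j x t) / (3*t)

section Partials

variable {g : ℝ → ℝ → ℝ} {I : Set ℝ} {x t : ℝ} {m n : WithTop ℕ∞}

theorem ContDiffOn.contDiff_slice (hg : ContDiffOn ℝ n (uncurry g) (univ ×ˢ I)) (ht : t ∈ I) :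
    ContDiff ℝ n (fun x' => g x' t) := by
  rw [← contDiffOn_univ]
  exact hg.comp (contDiffOn_id.prodMk contDiffOn_const) fun x' _ => ⟨mem_univ x', ht⟩

theorem ContDiffOn.differentiableAt_of_mem (hI : IsOpen I)
    (hg : ContDiffOn ℝ n (uncurry g) (univ ×ˢ I)) (hn : n ≠ 0) (ht : t ∈ I) :
    DifferentiableAt ℝ (uncurry g) (x, t) :=
  (hg.contDiffAt ((isOpen_univ.prod hI).mem_nhds ⟨mem_univ x, ht⟩)).differentiableAt hn

theorem hasDerivAt_slice_fst (h : DifferentiableAt ℝ (uncurry g) (x, t)) :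
    HasDerivAt (fun x' => g x' t) (fderiv ℝ (uncurry g) (x, t) (1, 0)) x :=
  h.hasFDerivAt.comp_hasDerivAt (l := uncurry g) x
    ((hasDerivAt_id' x).prodMk (hasDerivAt_const x t))

theorem hasDerivAt_slice_snd (h : DifferentiableAt ℝ (uncurry g) (x, t)) :
    HasDerivAt (fun t' => g x t') (fderiv ℝ (uncurry g) (x, t) (0, 1)) t :=
  h.hasFDerivAt.comp_hasDerivAt (l := uncurry g) t
    ((hasDerivAt_const t x).prodMk (hasDerivAt_id' t))

theorem pdx_eq_fderiv (h : DifferentiableAt ℝ (uncurry g) (x, t)) :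
    pdx g x t = fderiv ℝ (uncurry g) (x, t) (1, 0) :=
  (hasDerivAt_slice_fst h).deriv

theorem pdt_eq_fderiv (h : DifferentiableAt ℝ (uncurry g) (x, t)) :
    pdt g x t = fderiv ℝ (uncurry g) (x, t) (0, 1) :=
  (hasDerivAt_slice_snd h).deriv

theorem hasDerivAt_pdt (h : DifferentiableAt ℝ (uncurry g) (x, t)) :
    HasDerivAt (fun t' => g x t') (pdt g x t) t :=
  (hasDerivAt_slice_snd h).differentiableAt.hasDerivAt

theorem ContDiffOn.uncurry_pdx (hI : IsOpen I) (hg : ContDiffOn ℝ n (uncurry g) (univ ×ˢ I))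
    (hmn : m + 1 ≤ n) : ContDiffOn ℝ m (uncurry (pdx g)) (univ ×ˢ I) := by
  refine ((hg.fderiv_of_isOpen (isOpen_univ.prod hI) hmn).clm_apply
    (contDiffOn_const (c := ((1, 0) : ℝ × ℝ)))).congr ?_
  rintro ⟨x, t⟩ ⟨-, ht⟩
  exact pdx_eq_fderiv (hg.differentiableAt_of_mem hI (ne_bot_of_le_ne_bot (by simp) hmn) ht)

theorem ContDiffOn.uncurry_pdt (hI : IsOpen I) (hg : ContDiffOn ℝ n (uncurry g) (univ ×ˢ I))
    (hmn : m + 1 ≤ n) : ContDiffOn ℝ m (uncurry (pdt g)) (univ ×ˢ I) := by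
  refine ((hg.fderiv_of_isOpen (isOpen_univ.prod hI) hmn).clm_apply
    (contDiffOn_const (c := ((0, 1) : ℝ × ℝ)))).congr ?_
  rintro ⟨x, t⟩ ⟨-, ht⟩
  exact pdt_eq_fderiv (hg.differentiableAt_of_mem hI (ne_bot_of_le_ne_bot (by simp) hmn) ht)

theorem pdx_eventuallyEq_fderiv (hI : IsOpen I) (hg : ContDiffOn ℝ n (uncurry g) (univ ×ˢ I))
    (hn : n ≠ 0) (ht : t ∈ I) :
    uncurry (pdx g) =ᶠ[nhds (x, t)] fun p => fderiv ℝ (uncurry g) p (1, 0) := by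
  filter_upwards [(isOpen_univ.prod hI).mem_nhds ⟨mem_univ x, ht⟩] with p hp
  exact pdx_eq_fderiv (hg.differentiableAt_of_mem hI hn hp.2)

theorem pdt_eventuallyEq_fderiv (hI : IsOpen I) (hg : ContDiffOn ℝ n (uncurry g) (univ ×ˢ I))
    (hn : n ≠ 0) (ht : t ∈ I) :
    uncurry (pdt g) =ᶠ[nhds (x, t)] fun p => fderiv ℝ (uncurry g) p (0, 1) := by
  filter_upwards [(isOpen_univ.prod hI).mem_nhds ⟨mem_univ x, ht⟩] with p hp
  exact pdt_eq_fderiv (hg.differentiableAt_of_mem hI hn hp.2)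

theorem pdt_pdx_eq_pdx_pdt (hI : IsOpen I) (hg : ContDiffOn ℝ 2 (uncurry g) (univ ×ˢ I))
    (ht : t ∈ I) : pdt (pdx g) x t = pdx (pdt g) x t := by
  have hgx : ContDiffAt ℝ 2 (uncurry g) (x, t) :=
    hg.contDiffAt ((isOpen_univ.prod hI).mem_nhds ⟨mem_univ x, ht⟩)
  have hD : DifferentiableAt ℝ (fderiv ℝ (uncurry g)) (x, t) :=
    (hgx.fderiv_right (m := 1) le_rfl).differentiableAt one_ne_zero
  have hdir : ∀ v w : ℝ × ℝ, fderiv ℝ (fun p => fderiv ℝ (uncurry g) p v) (x, t) w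
      = fderiv ℝ (fderiv ℝ (uncurry g)) (x, t) w v := by
    intro v w
    rw [fderiv_clm_apply hD (differentiableAt_const v)]
    simp
  have hdx := (hg.uncurry_pdx hI (m := 1) (by norm_num)).differentiableAt_of_mem hI
    one_ne_zero ht (x := x)
  have hdt := (hg.uncurry_pdt hI (m := 1) (by norm_num)).differentiableAt_of_mem hI
    one_ne_zero ht (x := x)
  rw [pdt_eq_fderiv hdx, pdx_eq_fderiv hdt,
    (pdx_eventuallyEq_fderiv hI hg two_ne_zero ht).fderiv_eq,
    (pdt_eventuallyEq_fderiv hI hg two_ne_zero ht).fderiv_eq, hdir, hdir]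
  exact hgx.isSymmSndFDerivAt (by simp) _ _

theorem hasDerivAt_pdx_of_contDiff (h : ContDiff ℝ 1 (fun x' => g x' t)) :
    HasDerivAt (fun x' => g x' t) (pdx g x t) x :=
  (h.differentiable one_ne_zero x).hasDerivAt

theorem hasDerivAt_pdx_pdx_of_contDiff (h : ContDiff ℝ 2 (fun x' => g x' t)) :
    HasDerivAt (fun x' => pdx g x' t) (pdx (pdx g) x t) x :=
  (h.differentiable_deriv_two x).hasDerivAt

end Partials

section Riccati

variable {Y : ℝ → ℝ} {α x : ℝ}

theorem hasDerivAt_riccatiSubst (hY : ContDiff ℝ 2 Y) (hx : Y x ≠ 0) :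
    HasDerivAt (fun x => (deriv Y x + α) / (2 * Y x))
      ((deriv (deriv Y) x * (2 * Y x) - (deriv Y x + α) * (2 * deriv Y x)) / (2 * Y x) ^ 2) x :=
  ((hY.differentiable_deriv_two x).hasDerivAt.add_const α).div
    ((hY.differentiable two_ne_zero x).hasDerivAt.const_mul 2) (mul_ne_zero two_ne_zero hx)

theorem hasDerivAt_riccati {c : ℝ} (hY : ContDiff ℝ 2 Y) (hx : Y x ≠ 0)
    (hYxx : deriv (deriv Y) x = (deriv Y x ^ 2 - α ^ 2) / (2 * Y x) + 2 * c * Y x) :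
    HasDerivAt (fun x => (deriv Y x + α) / (2 * Y x))
      (c - ((deriv Y x + α) / (2 * Y x)) ^ 2) x := by
  convert hasDerivAt_riccatiSubst hY hx using 1
  rw [hYxx]
  field_simp
  ring

end Riccati

theorem pdt_riccatiSubst {Y u F : ℝ → ℝ → ℝ} {I : Set ℝ} {α μ x t : ℝ} (hI : IsOpen I)
    (hY : ContDiffOn ℝ 2 (uncurry Y) (univ ×ˢ I)) (hu : ContDiff ℝ 2 (fun x' => u x' t))
    (ht : t ∈ I) (hne : Y x t ≠ 0)
    (hYt : ∀ x', pdt Y x' t = 2 * pdx u x' t * Y x' t - 2 * (u x' t + 2 * μ) * pdx Y x' t)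
    (hF : ∀ x' t', F x' t' = (pdx Y x' t' + α) / (2 * Y x' t')) :
    pdt F x t = pdx (fun x' t' => pdx u x' t' - 2 * (u x' t' + 2 * μ) * F x' t') x t := by
  have hYx : ContDiff ℝ 2 (fun x' => Y x' t) := hY.contDiff_slice ht
  have hux := hasDerivAt_pdx_of_contDiff (x := x) (hu.of_le one_le_two)
  have huxx := hasDerivAt_pdx_pdx_of_contDiff (x := x) hu
  have hFt : HasDerivAt (fun t' => F x t') ((pdt (pdx Y) x t * (2 * Y x t)
      - (pdx Y x t + α) * (2 * pdt Y x t)) / (2 * Y x t) ^ 2) t := by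
    have hdY := hY.differentiableAt_of_mem hI two_ne_zero ht (x := x)
    have hdYx := (hY.uncurry_pdx hI (m := 1) (by norm_num)).differentiableAt_of_mem hI
      one_ne_zero ht (x := x)
    rw [show (fun t' => F x t') = _ from funext fun t' => hF x t']
    exact ((hasDerivAt_pdt hdYx).add_const α).div ((hasDerivAt_pdt hdY).const_mul 2)
      (mul_ne_zero two_ne_zero hne)
  have hYxt : pdt (pdx Y) x t
      = 2 * pdx (pdx u) x t * Y x t - 2 * (u x t + 2 * μ) * pdx (pdx Y) x t := by
    have : HasDerivAt (fun x' => 2 * pdx u x' t * Y x' t - 2 * (u x' t + 2 * μ) * pdx Y x' t)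
      _ x := ((huxx.const_mul 2).mul (hasDerivAt_pdx_of_contDiff (hYx.of_le one_le_two))).sub
      (((hux.add_const (2 * μ)).const_mul 2).mul (hasDerivAt_pdx_pdx_of_contDiff hYx))
    rw [pdt_pdx_eq_pdx_pdt hI hY ht, pdx, show (fun x' => pdt Y x' t) = _ from funext hYt,
      this.deriv]
    ring
  have hFx : HasDerivAt (fun x' => F x' t) ((pdx (pdx Y) x t * (2 * Y x t)
      - (pdx Y x t + α) * (2 * pdx Y x t)) / (2 * Y x t) ^ 2) x := by
    rw [show (fun x' => F x' t) = _ from funext fun x' => hF x' t]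
    exact hasDerivAt_riccatiSubst hYx hne
  have hrhs : HasDerivAt (fun x' => pdx u x' t - 2 * (u x' t + 2 * μ) * F x' t) _ x :=
    huxx.sub (((hux.add_const (2 * μ)).const_mul 2).mul hFx)
  refine hFt.deriv.trans (Eq.trans ?_ hrhs.deriv.symm)
  rw [hYxt, hYt x, hF x t]
  field_simp
  ring

theorem contDiff_ucon_slice {n : ℕ} {y : Fin n → ℝ → ℝ → ℝ} {k : WithTop ℕ∞} {t : ℝ}
    (hy : ∀ j, ContDiff ℝ k (fun x => y j x t)) : ContDiff ℝ k (fun x => ucon n y x t) :=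
  (contDiff_id.div_const _).add ((ContDiff.sum fun j _ => hy j).div_const _)

theorem statement10_general
    (n : ℕ)
    (lam alp : Fin n → ℝ)
    (a b : ℝ) (I : Set ℝ) (hI : I = Set.Ioo a b)
    (y : Fin n → ℝ → ℝ → ℝ)
    (hysmooth : ∀ j, ContDiffOn ℝ (⊤ : ℕ∞) (uncurry (y j)) (univ ×ˢ I))
    (hyne : ∀ j x t, t ∈ I → y j x t ≠ 0)
    -- system (yxx)
    (hyxx : ∀ j x t, t ∈ I →
      pdx (pdx (y j)) x t
        = ((pdx (y j) x t)^2 - (alp j)^2) / (2 * y j x t)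
          + 2 * (ucon n y x t - lam j) * y j x t)
    -- system (yt)
    (hyt : ∀ j x t, t ∈ I →
      pdt (y j) x t
        = 2 * pdx (ucon n y) x t * y j x t
          - 2 * (ucon n y x t + 2 * lam j) * pdx (y j) x t)
    -- the new variables fⱼ
    (f : Fin n → ℝ → ℝ → ℝ)
    (hf : ∀ j x t, f j x t = (pdx (y j) x t + alp j) / (2 * y j x t)) :
    ∀ j, ∀ x t, t ∈ I →
      pdx (y j) x t = 2 * y j x t * f j x t - alp j
      ∧ pdx (f j) x t = ucon n y x t - (f j x t)^2 - lam j
      ∧ pdt (f j) x t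
          = pdx (fun x' t' => pdx (ucon n y) x' t'
              - 2*(ucon n y x' t' + 2*lam j) * f j x' t') x t := by
  intro j x t ht
  have hIo : IsOpen I := hI ▸ isOpen_Ioo
  have hy2 : ∀ i, ContDiffOn ℝ 2 (uncurry (y i)) (univ ×ˢ I) :=
    fun i => (hysmooth i).of_le (WithTop.coe_le_coe.mpr le_top)
  have hyx : ∀ i, ContDiff ℝ 2 (fun x' => y i x' t) := fun i => (hy2 i).contDiff_slice ht
  have hne := hyne j x t ht
  refine ⟨?_, ?_, pdt_riccatiSubst hIo (hy2 j) (contDiff_ucon_slice hyx) ht hne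
    (fun x' => hyt j x' t ht) (hf j)⟩
  · rw [hf j x t]
    field_simp
    ring
  · have hR := (hasDerivAt_riccati (α := alp j) (c := ucon n y x t - lam j) (hyx j) hne
      (hyxx j x t ht)).deriv
    calc pdx (f j) x t = deriv (fun x' => (pdx (y j) x' t + alp j) / (2 * y j x' t)) x :=
          congrArg (deriv · x) (funext fun x' => hf j x' t)
      _ = ucon n y x t - lam j - f j x t ^ 2 := by rw [hf j x t]; exact hR
      _ = _ := by ring

/-- for solutions of (yxx), (yt), (uy), the variables
`fⱼ = (∂ₓyⱼ + αⱼ)/(2yⱼ)` satisfy the polynomial system (yfx), (yft):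
`∂ₓyⱼ = 2yⱼfⱼ − αⱼ`, `∂ₓfⱼ = u − fⱼ² − λⱼ`, `∂ₜfⱼ = ∂ₓ(∂ₓu − 2(u+2λⱼ)fⱼ)`. -/
theorem statement10
    (n : ℕ) (hn : 1 ≤ n)
    (lam alp : Fin n → ℝ) (hlam : Function.Injective lam)
    (a b : ℝ) (I : Set ℝ) (hI : I = Set.Ioo a b) (hI0 : (0:ℝ) ∉ I)
    (y : Fin n → ℝ → ℝ → ℝ)
    (hysmooth : ∀ j, ContDiffOn ℝ (⊤ : ℕ∞) (uncurry (y j)) (univ ×ˢ I))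
    (hyne : ∀ j x t, t ∈ I → y j x t ≠ 0)
    -- system (yxx)
    (hyxx : ∀ j x t, t ∈ I →
      pdx (pdx (y j)) x t
        = ((pdx (y j) x t)^2 - (alp j)^2) / (2 * y j x t)
          + 2 * (ucon n y x t - lam j) * y j x t)
    -- system (yt)
    (hyt : ∀ j x t, t ∈ I →
      pdt (y j) x t
        = 2 * pdx (ucon n y) x t * y j x t
          - 2 * (ucon n y x t + 2 * lam j) * pdx (y j) x t)
    -- the new variables fⱼ
    (f : Fin n → ℝ → ℝ → ℝ)
    (hf : ∀ j x t, f j x t = (pdx (y j) x t + alp j) / (2 * y j x t)) :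
    ∀ j, ∀ x t, t ∈ I →
      pdx (y j) x t = 2 * y j x t * f j x t - alp j
      ∧ pdx (f j) x t = ucon n y x t - (f j x t)^2 - lam j
      ∧ pdt (f j) x t
          = pdx (fun x' t' => pdx (ucon n y) x' t'
              - 2*(ucon n y x' t' + 2*lam j) * f j x' t') x t :=
  statement10_general n lam alp a b I hI y hysmooth hyne hyxx hyt f hf
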